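/- arXiv:1712.04794 — 3 statements merged into one kernel-verified Lean document; each statement's English description precedes it below -/
import Mathlib

section
/- Let A and G be groups. Then G belongs to C_q(A) if and only if S_A G = G (i.e. the A-socle of G is the whole group G). -/
open CategoryTheory Limits

universe u v

/-- A class of groups closed under isomorphisms. -/
def IsoClosed (C : GrpCat.{u} → Prop) : Prop :=
  ∀ ⦃G H : GrpCat.{u}⦄, (G ≅ H) → C G → C H

/-- A class of groups is closed under direct limits if it contains the colimit
(computed in the category of groups) of every small diagram all of whose
objects belong to the class. -/
def ColimClosed (C : GrpCat.{u} → Prop) : Prop :=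
  ∀ (J : Type u) [SmallCategory J] (F : J ⥤ GrpCat.{u}) (c : Cocone F),
    IsColimit c → (∀ j, C (F.obj j)) → C c.pt

/-- A class of groups is closed under quotients if it contains the image of
every surjective homomorphism out of one of its members. -/
def QuotClosed (C : GrpCat.{u} → Prop) : Prop :=
  ∀ (G Q : GrpCat.{u}) (π : (G : Type u) →* Q),
    Function.Surjective π → C G → C Q

/-- `C_q(A)`: the smallest class of groups containing `A` and closed under
isomorphisms, direct limits and quotients. -/
def socClass (A G : GrpCat.{u}) : Prop :=
  ∀ C : GrpCat.{u} → Prop, IsoClosed C → ColimClosed C → QuotClosed C → C A → C G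

/-- The `A`-socle `S_A G` of `G`: the subgroup of `G` generated by the images
of all homomorphisms `A →* G`. -/
def socle (A : Type u) [Group A] (G : Type v) [Group G] : Subgroup G :=
  ⨆ f : A →* G, f.range


/-!
The class of groups `H` with `socle A H = ⊤` contains `A` and is closed under isomorphisms,
quotients and colimits: homomorphisms map the socle into the socle, and the point of a colimit
cocone is generated by the images of its legs. Conversely, if `socle A G = ⊤` then `G` is a
quotient of the free product of copies of `A` indexed by `A →* G`, and that free product is a
coproduct of copies of `A`, hence lies in every class closed under colimits that contains `A`.
-/

universe w

section Socle

variable {A : Type u} {G : Type v} {H : Type w} [Group A] [Group G] [Group H]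

lemma range_le_socle (f : A →* G) : f.range ≤ socle A G :=
  le_iSup (fun g : A →* G => g.range) f

lemma socle_map_le (π : G →* H) : (socle A G).map π ≤ socle A H := by
  rw [socle, Subgroup.map_iSup]
  exact iSup_le fun f => by
    rw [← MonoidHom.range_comp]
    exact range_le_socle (π.comp f)

lemma socle_eq_top_of_surjective {π : G →* H} (hπ : Function.Surjective π)
    (h : socle A G = ⊤) : socle A H = ⊤ :=
  top_le_iff.1 <| by
    simpa only [h, Subgroup.map_top_of_surjective π hπ] using socle_map_le (A := A) π

variable (A) in
lemma socle_self_eq_top : socle A A = ⊤ :=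
  top_le_iff.1 fun x _ => range_le_socle (MonoidHom.id A) ⟨x, rfl⟩

lemma surjective_coprodI_lift_of_socle_eq_top (h : socle A G = ⊤) :
    Function.Surjective (Monoid.CoprodI.lift fun f : A →* G => f) :=
  MonoidHom.range_eq_top.1 <| by rw [Monoid.CoprodI.range_eq_iSup]; exact h

end Socle

namespace GrpCat

/-- The cocone corestricts to the subgroup generated by the images of its legs, so the
identity of the colimit factors through the inclusion of that subgroup. -/
lemma iSup_range_ι_eq_top {J : Type*} [Category J] {F : J ⥤ GrpCat.{u}} {c : Cocone F}
    (hc : IsColimit c) : ⨆ j, (c.ι.app j).hom.range = (⊤ : Subgroup c.pt) := by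
  set S : Subgroup c.pt := ⨆ j, (c.ι.app j).hom.range
  have hmem (j : J) (x : F.obj j) : (c.ι.app j).hom x ∈ S :=
    Subgroup.mem_iSup_of_mem j ⟨x, rfl⟩
  let c' : Cocone F :=
    { pt := of S
      ι :=
        { app := fun j => ofHom ((c.ι.app j).hom.codRestrict S (hmem j))
          naturality := fun j j' φ => by
            ext x
            exact Subtype.ext (ConcreteCategory.congr_hom (c.w φ) x) } }
  have hfactor : hc.desc c' ≫ ofHom S.subtype = 𝟙 c.pt :=
    hc.hom_ext fun j => by
      ext x
      exact congrArg Subtype.val (ConcreteCategory.congr_hom (hc.fac c' j) x)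
  refine top_le_iff.1 fun x _ => ?_
  have hx : S.subtype ((hc.desc c').hom x) = x := ConcreteCategory.congr_hom hfactor x
  exact hx ▸ ((hc.desc c').hom x).2

section CoprodI

variable {ι : Type u} (M : ι → GrpCat.{u})

abbrev coprodICofan : Cofan M :=
  Cofan.mk (of (Monoid.CoprodI fun i => M i)) fun i =>
    ofHom (Monoid.CoprodI.of (M := fun i => M i) (i := i))

def isColimitCoprodICofan : IsColimit (coprodICofan M) :=
  Cofan.IsColimit.mk _ (fun t => ofHom (Monoid.CoprodI.lift fun i => (t.inj i).hom))
    (fun t i => by ext x; exact Monoid.CoprodI.lift_of (fun i => (t.inj i).hom) x)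
    (fun t m hm => hom_ext <| Monoid.CoprodI.ext_hom _ _ fun i => by
      ext x
      exact (ConcreteCategory.congr_hom (hm i) x).trans
        (Monoid.CoprodI.lift_of (fun i => (t.inj i).hom) x).symm)

end CoprodI

end GrpCat

section SocleEqTop

variable (A : Type u) [Group A]

lemma isoClosed_socle_eq_top : IsoClosed fun H : GrpCat.{v} => socle A H = ⊤ :=
  fun _ _ e => socle_eq_top_of_surjective e.groupIsoToMulEquiv.surjective

lemma quotClosed_socle_eq_top : QuotClosed fun H : GrpCat.{v} => socle A H = ⊤ :=
  fun _ _ _ hπ => socle_eq_top_of_surjective hπ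

lemma colimClosed_socle_eq_top : ColimClosed fun H : GrpCat.{v} => socle A H = ⊤ := by
  intro J _ F c hc hF
  refine top_le_iff.1 <| (GrpCat.iSup_range_ι_eq_top hc).ge.trans <| iSup_le fun j => ?_
  calc (c.ι.app j).hom.range = (socle A (F.obj j)).map (c.ι.app j).hom := by
        rw [hF j, MonoidHom.range_eq_map]
    _ ≤ socle A c.pt := socle_map_le _

end SocleEqTop

/-- A group `G` belongs to `C_q(A)` if and only if the `A`-socle of `G` is all
of `G`. -/
theorem stmt5 (A G : GrpCat.{u}) :
    socClass A G ↔ socle (A : Type u) (G : Type u) = ⊤ := by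
  refine ⟨fun h => h _ (isoClosed_socle_eq_top A) (colimClosed_socle_eq_top A)
    (quotClosed_socle_eq_top A) (socle_self_eq_top A), fun h C _ hcolim hquot hA => ?_⟩
  have hcoprod : C (GrpCat.coprodICofan fun _ : (A →* G) => A).pt :=
    hcolim _ _ _ (GrpCat.isColimitCoprodICofan _) fun _ => hA
  exact hquot _ G (Monoid.CoprodI.lift fun f : A →* G => f)
    (surjective_coprodI_lift_of_socle_eq_top h) hcoprod
end

section
/- Let A and G be groups. Then G belongs to C_t(A) if and only if T_A G = G (i.e. the A-radical of G is the whole group G). -/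
open CategoryTheory Limits

universe u v

/-- A class of groups is closed under extensions if whenever
`1 → N → G → Q → 1` is a short exact sequence with `N` and `Q` in the class,
then `G` is in the class. -/
def ExtClosed (C : GrpCat.{u} → Prop) : Prop :=
  ∀ (N G Q : GrpCat.{u}) (ι : (N : Type u) →* G) (π : (G : Type u) →* Q),
    Function.Injective ι → Function.Surjective π → ι.range = π.ker →
    C N → C Q → C G

/-- `C_t(A)`: the smallest class of groups containing `A` and closed under
isomorphisms, direct limits, quotients and extensions. -/
def radClass (A G : GrpCat.{u}) : Prop :=
  ∀ C : GrpCat.{u} → Prop, IsoClosed C → ColimClosed C → QuotClosed C → ExtClosed C → C A → C G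

/-- The `A`-radical `T_A G` of `G`: the smallest normal subgroup `N` of `G`
such that every homomorphism from `A` to `G ⧸ N` is trivial. -/
def radical (A : Type u) [Group A] (G : Type v) [Group G] : Subgroup G :=
  sInf {N : Subgroup G | ∃ _ : N.Normal, ∀ f : A →* G ⧸ N, f = 1}

/-!
Write `P H` for `radical A H = ⊤`. Equivalently, every homomorphism from `H` to a group that
receives only trivial homomorphisms from `A` is trivial. In this form `P` visibly holds for `A`
and passes to quotients, extensions and colimits, so it holds on `C_t(A)`.

Conversely, let `C` be a class as in the definition of `C_t(A)` and suppose `P G`. Unions of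
chains of normal subgroups are directed colimits, so Zorn gives a normal subgroup `M` of `G`,
maximal among those in `C`. The subgroup `Ω` of `G ⧸ M` generated by the images of all
homomorphisms `A → G ⧸ M` is characteristic and a quotient of a free product of copies of `A`,
so it lies in `C`; its preimage in `G` is an extension of `M` by `Ω`, hence equals `M` by
maximality. So `Ω` is trivial, and `P G` forces `M = G`.
-/

section Radical

variable {A : Type u} [Group A]

theorem radical_eq_top_iff {G : Type v} [Group G] :
    radical A G = ⊤ ↔
      ∀ (H : Type v) [Group H], (∀ f : A →* H, f = 1) → ∀ φ : G →* H, φ = 1 := by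
  constructor
  · intro hG H _ hH φ
    -- `G ⧸ ker φ` embeds into `H`, so it receives no nontrivial homomorphism from `A`.
    have hkills : ∀ f : A →* G ⧸ φ.ker, f = 1 := fun f =>
      MonoidHom.ext fun a => QuotientGroup.kerLift_injective φ <| by
        rw [MonoidHom.one_apply, map_one]
        exact DFunLike.congr_fun (hH ((QuotientGroup.kerLift φ).comp f)) a
    rw [← MonoidHom.ker_eq_top_iff, eq_top_iff, ← hG]
    exact sInf_le ⟨inferInstance, hkills⟩
  · intro h
    refine eq_top_iff.mpr (le_sInf ?_)
    rintro N ⟨_, hN⟩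
    rw [← QuotientGroup.ker_mk' N, MonoidHom.ker_eq_top_iff.mpr (h _ hN _)]

theorem radical_self_eq_top : radical A A = ⊤ :=
  radical_eq_top_iff.mpr fun _ _ hH => hH

theorem radical_eq_top_of_surjective {G Q : Type v} [Group G] [Group Q] (π : G →* Q)
    (hπ : Function.Surjective π) (hG : radical A G = ⊤) : radical A Q = ⊤ :=
  radical_eq_top_iff.mpr fun H _ hH φ =>
    (MonoidHom.cancel_right hπ).mp <| by
      rw [MonoidHom.one_comp]
      exact radical_eq_top_iff.mp hG H hH _

theorem radical_eq_top_of_extension {N G Q : Type v} [Group N] [Group G] [Group Q]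
    (ι : N →* G) (π : G →* Q) (hπ : Function.Surjective π) (hrk : ι.range = π.ker)
    (hN : radical A N = ⊤) (hQ : radical A Q = ⊤) : radical A G = ⊤ := by
  refine radical_eq_top_iff.mpr fun H _ hH φ => ?_
  have hιφ : φ.comp ι = 1 := radical_eq_top_iff.mp hN H hH _
  have hker : π.ker ≤ φ.ker := by
    rw [← hrk]
    rintro _ ⟨n, rfl⟩
    exact DFunLike.congr_fun hιφ n
  obtain ⟨ψ, hψ⟩ : ∃ ψ : Q →* H, ψ.comp π = φ :=
    ⟨_, π.liftOfRightInverse_comp _ (Function.rightInverse_surjInv hπ) ⟨φ, hker⟩⟩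
  rw [← hψ, radical_eq_top_iff.mp hQ H hH ψ, MonoidHom.one_comp]

theorem radical_eq_top_of_isColimit {J : Type u} [SmallCategory J] {F : J ⥤ GrpCat.{u}}
    {c : Cocone F} (hc : IsColimit c) (hF : ∀ j, radical A (F.obj j) = ⊤) :
    radical A c.pt = ⊤ := by
  refine radical_eq_top_iff.mpr fun H _ hH φ => ?_
  have h : GrpCat.ofHom φ = GrpCat.ofHom (1 : c.pt →* H) := hc.hom_ext fun j => by
    ext x
    exact DFunLike.congr_fun (radical_eq_top_iff.mp (hF j) H hH (φ.comp (c.ι.app j).hom)) x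
  exact congrArg GrpCat.Hom.hom h

end Radical

theorem radical_eq_top_of_radClass {A G : GrpCat.{u}} (h : radClass A G) : radical A G = ⊤ := by
  refine h (fun H => radical A H = ⊤) ?_ (fun _ _ _ _ hc hF => radical_eq_top_of_isColimit hc hF)
    (fun _ _ π hπ hX => radical_eq_top_of_surjective π hπ hX)
    (fun _ _ _ ι π _ hπ hrk hN hQ => radical_eq_top_of_extension ι π hπ hrk hN hQ)
    radical_self_eq_top
  intro X Y e hX
  exact radical_eq_top_of_surjective e.groupIsoToMulEquiv.toMonoidHom
    e.groupIsoToMulEquiv.surjective hX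

namespace Monoid.CoprodI

variable {ι : Type u} (X : ι → GrpCat.{u})

def cofan : Cofan X :=
  Cofan.mk (GrpCat.of (CoprodI fun i => X i)) fun _ => GrpCat.ofHom (of (M := fun i => X i))

def isColimitCofan : IsColimit (cofan X) :=
  Cofan.IsColimit.mk _ (fun t => GrpCat.ofHom (lift fun i => (t.inj i).hom))
    (fun t i => by ext a; exact lift_of (M := fun i => X i) (fun i => (t.inj i).hom) a)
    (fun t m hm => GrpCat.hom_ext <| ext_hom (M := fun i => X i) _ _ fun i =>
      MonoidHom.ext fun a =>
        (ConcreteCategory.congr_hom (hm i) a).trans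
          (lift_of (M := fun i => X i) (fun i => (t.inj i).hom) a).symm)

end Monoid.CoprodI

namespace Subgroup

variable {G : Type u} [Group G]

def inclusionDiagram (s : Set (Subgroup G)) : s ⥤ GrpCat.{u} where
  obj N := GrpCat.of N.1
  map h := GrpCat.ofHom (inclusion (leOfHom h))

def sSupCocone (s : Set (Subgroup G)) : Cocone (inclusionDiagram s) where
  pt := GrpCat.of ↥(sSup s)
  ι := { app N := GrpCat.ofHom (inclusion (le_sSup N.2)) }

noncomputable def isColimitSSupCocone {s : Set (Subgroup G)} (hne : s.Nonempty)
    (hs : DirectedOn (· ≤ ·) s) : IsColimit (sSupCocone s) := by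
  have : Nonempty s := hne.to_subtype
  have : IsDirectedOrder s := hs.isDirectedOrder
  have : HasColimit (inclusionDiagram s) :=
    ⟨⟨⟨_, GrpCat.FilteredColimits.colimitCoconeIsColimit _⟩⟩⟩
  have := reflectsColimit_of_reflectsIsomorphisms (inclusionDiagram s) (forget GrpCat)
  refine isColimitOfReflects (forget GrpCat) (Types.FilteredColimit.isColimitOf' _ _ ?_ ?_)
  · rintro ⟨x, hx⟩
    obtain ⟨N, hN, hxN⟩ := (mem_sSup_of_directedOn hne hs).mp hx
    exact ⟨⟨N, hN⟩, ⟨x, hxN⟩, rfl⟩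
  · intro N x y hxy
    exact ⟨N, 𝟙 N, by rw [inclusion_injective (le_sSup N.2) hxy]⟩

def homImagesSup (A : Type*) [Group A] (H : Type*) [Group H] : Subgroup H :=
  ⨆ f : A →* H, f.range

instance (A : Type*) [Group A] (H : Type*) [Group H] : (homImagesSup A H).Characteristic :=
  characteristic_iff_map_le.mpr fun ϕ => by
    rw [homImagesSup, map_iSup]
    exact iSup_mono' fun f => ⟨ϕ.toMonoidHom.comp f, (MonoidHom.map_range _ _).le⟩

end Subgroup

section ClosureProperties

variable {C : GrpCat.{u} → Prop}

theorem ColimClosed.coprodI (hC : ColimClosed C) {ι : Type u} (X : ι → GrpCat.{u})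
    (hX : ∀ i, C (X i)) : C (GrpCat.of (Monoid.CoprodI fun i => X i)) :=
  hC _ _ _ (Monoid.CoprodI.isColimitCofan X) fun i => hX i.as

theorem ColimClosed.iSup_range (hcolim : ColimClosed C) (hquot : QuotClosed C) {ι : Type u}
    (X : ι → GrpCat.{u}) (hX : ∀ i, C (X i)) {H : Type u} [Group H] (f : ∀ i, X i →* H) :
    C (GrpCat.of ↥(⨆ i, (f i).range)) := by
  rw [← Monoid.CoprodI.range_eq_iSup]
  exact hquot _ _ _ (Monoid.CoprodI.lift f).rangeRestrict_surjective (hcolim.coprodI X hX)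

theorem ColimClosed.sSup (hcolim : ColimClosed C) {G : Type u} [Group G]
    {s : Set (Subgroup G)} (hne : s.Nonempty) (hs : DirectedOn (· ≤ ·) s)
    (h : ∀ N ∈ s, C (GrpCat.of N)) : C (GrpCat.of ↥(sSup s)) :=
  hcolim _ _ _ (Subgroup.isColimitSSupCocone hne hs) fun N => h N.1 N.2

theorem QuotClosed.bot (hquot : QuotClosed C) {X : GrpCat.{u}} (hX : C X) (G : Type u) [Group G] :
    C (GrpCat.of (⊥ : Subgroup G)) :=
  hquot X _ 1 (fun _ => ⟨1, Subsingleton.elim _ _⟩) hX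

theorem ExtClosed.of_ker_le (hext : ExtClosed C) {G H : Type u} [Group G] [Group H]
    (φ : G →* H) {K : Subgroup G} (hK : φ.ker ≤ K) (hker : C (GrpCat.of φ.ker))
    (hmap : C (GrpCat.of ↥(K.map φ))) : C (GrpCat.of K) :=
  hext _ _ _ (Subgroup.inclusion hK) (φ.subgroupMap K) (Subgroup.inclusion_injective hK)
    (φ.subgroupMap_surjective K) (by rw [Subgroup.inclusion_range, Subgroup.ker_subgroupMap])
    hker hmap

end ClosureProperties

theorem maximal_normal_mem_eq_top {C : GrpCat.{u} → Prop} (hcolim : ColimClosed C)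
    (hquot : QuotClosed C) (hext : ExtClosed C) {A : GrpCat.{u}} (hA : C A) {G : Type u} [Group G]
    (hG : radical A G = ⊤) {M : Subgroup G}
    (hM : Maximal (fun N : Subgroup G => N.Normal ∧ C (GrpCat.of N)) M) : M = ⊤ := by
  have : M.Normal := hM.1.1
  set Ω := Subgroup.homImagesSup A (G ⧸ M)
  set M' := Ω.comap (QuotientGroup.mk' M)
  have hMM' : M ≤ M' := by
    rw [← QuotientGroup.ker_mk' M]
    exact MonoidHom.ker_le_comap _ _
  have hM' : M'.Normal ∧ C (GrpCat.of M') := by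
    refine ⟨inferInstance, hext.of_ker_le (QuotientGroup.mk' M) ?_ ?_ ?_⟩
    · rwa [QuotientGroup.ker_mk']
    · rw [QuotientGroup.ker_mk']
      exact hM.1.2
    · rw [Subgroup.map_comap_eq_self_of_surjective (QuotientGroup.mk'_surjective M)]
      exact hcolim.iSup_range hquot (fun _ => A) (fun _ => hA) fun f => f
  have hM'M : M' ≤ M := hM.2 hM' hMM'
  have hkills : ∀ f : A →* G ⧸ M, f = 1 := fun f => MonoidHom.ext fun a => by
    obtain ⟨g, hg⟩ := QuotientGroup.mk'_surjective M (f a)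
    have hgM' : g ∈ M' := by
      rw [Subgroup.mem_comap, hg]
      exact le_iSup (fun f : A →* G ⧸ M => f.range) f ⟨a, rfl⟩
    rw [← hg, MonoidHom.one_apply, QuotientGroup.mk'_apply, QuotientGroup.eq_one_iff]
    exact hM'M hgM'
  rw [← QuotientGroup.ker_mk' M, MonoidHom.ker_eq_top_iff]
  exact radical_eq_top_iff.mp hG _ hkills _

theorem radClass_of_radical_eq_top {A G : GrpCat.{u}} (h : radical A G = ⊤) : radClass A G := by
  intro C hiso hcolim hquot hext hA
  obtain ⟨M, -, hM⟩ := zorn_le_nonempty₀ {N : Subgroup G | N.Normal ∧ C (GrpCat.of N)}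
    (fun c hc hchain N hN => ⟨sSup c,
      ⟨Subgroup.sSup_normal c fun K hK => (hc hK).1,
        hcolim.sSup ⟨N, hN⟩ hchain.directedOn fun K hK => (hc hK).2⟩,
      fun _ => le_sSup⟩)
    ⊥ ⟨inferInstance, hquot.bot hA G⟩
  have hCM := hM.1.2
  rw [maximal_normal_mem_eq_top hcolim hquot hext hA h hM] at hCM
  exact hiso Subgroup.topEquiv.toGrpIso hCM

/-- A group `G` belongs to `C_t(A)` if and only if the `A`-radical of `G` is
all of `G`. -/
theorem stmt6 (A G : GrpCat.{u}) :
    radClass A G ↔ radical (A : Type u) (G : Type u) = ⊤ :=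
  ⟨radical_eq_top_of_radClass, radClass_of_radical_eq_top⟩
end

section
/- For every pair of groups A and G, the A-socle S_A G belongs to C_q(A), and for every group L belonging to C_q(A), composition with the inclusion S_A G ↪ G induces a bijection Hom(L, S_A G) → Hom(L, G). (In other words, the class C_q(A) is co-reflective with co-reflection given by the A-socle.) -/
/-!
`S_A G` is the image of the free product of copies of `A` indexed by `A →* G`, hence lies in
`C_q(A)`. Conversely, the groups `L` all of whose homomorphisms to `G` land in `S_A G` contain `A`
and are closed under quotients and colimits (a colimit of groups is generated by the images of its
legs), so they include `C_q(A)`; for such `L`, restricting the codomain inverts composition with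
the inclusion.
-/

open CategoryTheory Limits

universe u v

section Colimits

variable {J : Type u} [SmallCategory J] {F : J ⥤ GrpCat.{u}} {c : Cocone F}

theorem CategoryTheory.Limits.IsColimit.iSup_range_ι_eq_top (hc : IsColimit c) :
    ⨆ j, MonoidHom.range (N := c.pt) (c.ι.app j).hom = ⊤ := by
  set H := ⨆ j, MonoidHom.range (N := c.pt) (c.ι.app j).hom
  have hι : ∀ j x, c.ι.app j x ∈ H := fun j x =>
    Subgroup.mem_iSup_of_mem j ⟨x, rfl⟩
  let d : Cocone F :=
    { pt := GrpCat.of H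
      ι :=
        { app := fun j => GrpCat.ofHom ((c.ι.app j).hom.codRestrict H (hι j))
          naturality := fun j j' f => by
            ext x
            exact Subtype.ext (ConcreteCategory.congr_hom (c.ι.naturality f) x) } }
  -- the inclusion `H ↪ c.pt` has the section `hc.desc d`, so it is surjective
  have hsection : hc.desc d ≫ GrpCat.ofHom H.subtype = 𝟙 c.pt :=
    hc.hom_ext fun j => by rw [← Category.assoc, hc.fac]; rfl
  refine eq_top_iff.2 fun y _ => ?_
  rw [← show H.subtype (hc.desc d y) = y from ConcreteCategory.congr_hom hsection y]
  exact (hc.desc d y).2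

theorem CategoryTheory.Limits.IsColimit.range_eq_iSup (hc : IsColimit c) {H : Type v}
    [Group H] (g : c.pt →* H) : g.range = ⨆ j, (g.comp (c.ι.app j).hom).range := by
  simp only [MonoidHom.range_eq_map g, ← hc.iSup_range_ι_eq_top, Subgroup.map_iSup,
    MonoidHom.map_range]

end Colimits

def coprodICofan {ι : Type u} (M : ι → GrpCat.{u}) : Cofan M :=
  Cofan.mk (GrpCat.of (Monoid.CoprodI fun i => M i)) fun _ =>
    GrpCat.ofHom (Monoid.CoprodI.of (M := fun i => M i))

def isColimitCoprodICofan {ι : Type u} (M : ι → GrpCat.{u}) : IsColimit (coprodICofan M) :=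
  Cofan.IsColimit.mk _
    (fun s => (GrpCat.ofHom (Monoid.CoprodI.lift fun i => (s.inj i).hom) :
      GrpCat.of (Monoid.CoprodI fun i => M i) ⟶ s.pt))
    (fun s i => by ext x; exact Monoid.CoprodI.lift_of (fun i => (s.inj i).hom) x)
    (fun s m hm => by
      refine GrpCat.hom_ext (Monoid.CoprodI.ext_hom _ _ fun i => ?_)
      ext x
      exact (ConcreteCategory.congr_hom (hm i) x).trans
        (Monoid.CoprodI.lift_of (fun i => (s.inj i).hom) x).symm)

theorem QuotClosed.isoClosed {C : GrpCat.{u} → Prop} (hC : QuotClosed C) : IsoClosed C :=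
  fun G H e => hC G H e.hom.hom fun y => ⟨e.inv y, ConcreteCategory.congr_hom e.inv_hom_id y⟩

namespace socClass

variable {A : GrpCat.{u}}

theorem self : socClass A A :=
  fun _ _ _ _ hA => hA

theorem of_isColimit {J : Type u} [SmallCategory J] {F : J ⥤ GrpCat.{u}} {c : Cocone F}
    (hc : IsColimit c) (hF : ∀ j, socClass A (F.obj j)) : socClass A c.pt :=
  fun C hiso hcolim hquot hA => hcolim J F c hc fun j => hF j C hiso hcolim hquot hA

theorem of_surjective {G Q : GrpCat.{u}} (π : G →* Q) (hπ : Function.Surjective π)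
    (hG : socClass A G) : socClass A Q :=
  fun C hiso hcolim hquot hA => hquot G Q π hπ (hG C hiso hcolim hquot hA)

end socClass

theorem range_lift_eq_socle (A : Type u) (G : Type v) [Group A] [Group G] :
    (Monoid.CoprodI.lift fun f : A →* G => f).range = socle A G :=
  Monoid.CoprodI.range_eq_iSup (G := fun _ => A) _

theorem socClass_socle (A G : GrpCat.{u}) : socClass A (GrpCat.of (socle A G)) := by
  let π := Monoid.CoprodI.lift fun f : A →* G => f
  have hπ : ∀ x, π x ∈ socle A G := fun x => range_lift_eq_socle A G ▸ ⟨x, rfl⟩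
  refine socClass.of_surjective (π.codRestrict _ hπ) (fun y => ?_)
    (socClass.of_isColimit (isColimitCoprodICofan fun _ : A →* G => A) fun _ => socClass.self)
  obtain ⟨x, hx⟩ : (y : G) ∈ π.range := (range_lift_eq_socle A G).symm ▸ y.2
  exact ⟨x, Subtype.ext hx⟩

theorem MonoidHom.range_comp_of_surjective {G N P : Type*} [Group G] [Group N] [Group P]
    (f : N →* P) {π : G →* N} (hπ : Function.Surjective π) : (f.comp π).range = f.range := by
  rw [range_comp, range_eq_top.2 hπ, ← range_eq_map]

theorem range_le_socle_of_socClass {A L : GrpCat.{u}} (hL : socClass A L) {G : Type v} [Group G]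
    (f : L →* G) : f.range ≤ socle A G := by
  have hquot : QuotClosed fun L : GrpCat.{u} => ∀ f : L →* G, f.range ≤ socle A G :=
    fun L Q π hπ hL f => f.range_comp_of_surjective hπ ▸ hL (f.comp π)
  refine hL _ hquot.isoClosed (fun J _ F c hc hF f => ?_) hquot (fun f => le_iSup _ f) f
  exact (hc.range_eq_iSup f).trans_le (iSup_le fun j => hF j _)

theorem Subgroup.bijective_subtype_comp {L G : Type*} [Group L] [Group G] {H : Subgroup G}
    (hL : ∀ f : L →* G, f.range ≤ H) : Function.Bijective fun f : L →* H => H.subtype.comp f :=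
  ⟨fun _ _ h => (MonoidHom.cancel_left H.subtype_injective).1 h,
    fun g => ⟨g.codRestrict H fun x => hL g ⟨x, rfl⟩, rfl⟩⟩

/-- `C_q(A)` is co-reflective with co-reflection the `A`-socle: `S_A G` belongs
to `C_q(A)`, and for every `L` in `C_q(A)` composition with the inclusion
`S_A G ↪ G` is a bijection `Hom(L, S_A G) → Hom(L, G)`. -/
theorem stmt7 (A G : GrpCat.{u}) :
    socClass A (GrpCat.of (socle (A : Type u) (G : Type u))) ∧
      ∀ L : GrpCat.{u}, socClass A L →
        Function.Bijective
          (fun f : (L : Type u) →* socle (A : Type u) (G : Type u) =>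
            (socle (A : Type u) (G : Type u)).subtype.comp f) :=
  ⟨socClass_socle A G, fun _ hL => Subgroup.bijective_subtype_comp (range_le_socle_of_socClass hL)⟩
end
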